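/- arXiv:1402.4085 — 6 statements merged into one kernel-verified Lean document; each statement's English description precedes it below -/
import Mathlib

section
/- For every integer k ≥ 2 and every integer n ≥ 1, the k-generalized Lucas number satisfies α^(n-1) ≤ L_n^(k) ≤ 2·α^n, where α is the unique real root of x^k − x^(k−1) − ... − x − 1 lying in the interval (1, 2). -/
/-!
Since `α` is a root of `Ψ_k`, the sequence `n ↦ α ^ n` satisfies the same `k`-term recurrence as
`L`, and for a recurrence with nonnegative coefficients an inequality between two sequences on `k`
consecutive terms propagates to all later terms. The upper bound `L n ≤ 2 α ^ n` holds on the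
initial terms `2 - k ≤ n ≤ 1`. For the lower bound one starts from the window `1 ≤ n ≤ k`, where
`L (n + 1) + L (n - k) = 2 L n` gives `L n ≥ 2 ^ (n - 1) ≥ α ^ (n - 1)`.
-/

open Finset

lemma sum_Icc_one_sub_eq_sum_range {M : Type*} [AddCommMonoid M] (f : ℤ → M) (n : ℤ) (k : ℕ) :
    ∑ i ∈ Icc (1 : ℤ) k, f (n - i) = ∑ i ∈ range k, f (n - 1 - i) := by
  refine sum_nbij' (fun i ↦ (i - 1).toNat) (fun i : ℕ ↦ (i : ℤ) + 1) ?_ ?_ ?_ ?_ ?_ <;>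
    intro i hi <;> simp only [mem_Icc, mem_range] at hi ⊢
  all_goals first | omega | congr 1; omega

theorem le_of_le_sum_range_of_sum_range_le {R : Type*} [AddCommMonoid R] [PartialOrder R]
    [IsOrderedAddMonoid R] {u v : ℤ → R} {k : ℕ} {m : ℤ}
    (hu : ∀ n, m + k ≤ n → u n ≤ ∑ i ∈ range k, u (n - 1 - i))
    (hv : ∀ n, m + k ≤ n → ∑ i ∈ range k, v (n - 1 - i) ≤ v n)
    (hinit : ∀ n, m ≤ n → n < m + k → u n ≤ v n) (n : ℤ) (hn : m ≤ n) : u n ≤ v n := by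
  induction n using Int.strongRec (m := m) with
  | lt n hlt => exact absurd hn (not_le.2 hlt)
  | ge n _ ih =>
    rcases lt_or_ge n (m + k) with hnk | hnk
    · exact hinit n hn hnk
    calc u n ≤ ∑ i ∈ range k, u (n - 1 - i) := hu n hnk
      _ ≤ ∑ i ∈ range k, v (n - 1 - i) := sum_le_sum fun i hi ↦ by
          simp only [mem_range] at hi
          exact ih _ (by omega) (by omega)
      _ ≤ v n := hv n hnk

lemma sum_range_zpow_sub_of_pow_eq_geom_sum {K : Type*} [Field K] {α : K} (hα : α ≠ 0) {k : ℕ}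
    (hroot : α ^ k = ∑ i ∈ range k, α ^ i) (a : ℤ) :
    ∑ i ∈ range k, α ^ (a - 1 - i) = α ^ a := by
  have hterm : ∀ i ∈ range k, α ^ (a - 1 - i) = α ^ (a - k) * α ^ (k - 1 - i) := by
    intro i hi
    have : ((k - 1 - i : ℕ) : ℤ) = k - 1 - i := by simp only [mem_range] at hi; omega
    rw [← zpow_natCast, ← zpow_add₀ hα, this]
    ring_nf
  rw [sum_congr rfl hterm, ← mul_sum, sum_range_reflect, ← hroot, ← zpow_natCast,
    ← zpow_add₀ hα, sub_add_cancel]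

structure IsGeneralizedLucas (k : ℕ) (L : ℤ → ℤ) : Prop where
  apply_eq_zero : ∀ j : ℤ, 2 - (k : ℤ) ≤ j → j ≤ -1 → L j = 0
  apply_zero : L 0 = 2
  apply_one : L 1 = 1
  apply_eq_sum : ∀ n : ℤ, 2 ≤ n → L n = ∑ i ∈ Icc (1 : ℤ) k, L (n - i)

namespace IsGeneralizedLucas

variable {k : ℕ} {L : ℤ → ℤ}

lemma apply_eq_sum_range (hL : IsGeneralizedLucas k L) {n : ℤ} (hn : 2 ≤ n) :
    L n = ∑ i ∈ range k, L (n - 1 - i) := by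
  rw [hL.apply_eq_sum n hn, sum_Icc_one_sub_eq_sum_range]

lemma add_one_add_sub_eq_two_mul (hL : IsGeneralizedLucas k L) {n : ℤ} (hn : 2 ≤ n) :
    L (n + 1) + L (n - k) = 2 * L n := by
  have h := sum_range_succ (fun i : ℕ ↦ L (n - i)) k
  rw [sum_range_succ'] at h
  rw [hL.apply_eq_sum_range (n := n + 1) (by omega), two_mul]
  nth_rw 2 [hL.apply_eq_sum_range hn]
  simpa [sub_sub, add_comm] using h.symm

lemma apply_two (hL : IsGeneralizedLucas k L) (hk : 2 ≤ k) : L 2 = 3 := by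
  obtain ⟨k, rfl⟩ := Nat.exists_eq_add_of_le hk
  have htail : ∑ i ∈ range k, L (2 - 1 - (i + 1 + 1 : ℕ)) = 0 :=
    sum_eq_zero fun i hi ↦ hL.apply_eq_zero _ (by simp only [mem_range] at hi; omega) (by omega)
  rw [hL.apply_eq_sum_range le_rfl, add_comm, sum_range_succ', sum_range_succ', htail]
  norm_num [hL.apply_zero, hL.apply_one]

lemma two_pow_le (hL : IsGeneralizedLucas k L) {n : ℤ} (hn : 1 ≤ n) (hnk : n ≤ k) :
    (2 : ℝ) ^ (n - 1) ≤ L n := by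
  induction n, hn using Int.leInduction with
  | base => simp [hL.apply_one]
  | succ n hn ih =>
    rcases eq_or_lt_of_le hn with rfl | hn
    · norm_num [hL.apply_two (by omega)]
    have hdouble : L (n + 1) = 2 * L n := by
      have := hL.add_one_add_sub_eq_two_mul (n := n) (by omega)
      rw [hL.apply_eq_zero (n - k) (by omega) (by omega)] at this
      omega
    calc (2 : ℝ) ^ (n + 1 - 1) = 2 * 2 ^ (n - 1) := by
          rw [← zpow_one_add₀ two_ne_zero]; ring_nf
      _ ≤ 2 * L n := by gcongr; exact ih (by omega)
      _ = L (n + 1) := by rw [hdouble]; push_cast; ring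

lemma le_two_mul_zpow (hL : IsGeneralizedLucas k L) {α : ℝ} (hα : 1 ≤ 2 * α)
    (hroot : α ^ k = ∑ i ∈ range k, α ^ i) (n : ℤ) (hn : 2 - (k : ℤ) ≤ n) :
    (L n : ℝ) ≤ 2 * α ^ n := by
  have hα0 : 0 < α := by linarith
  refine le_of_le_sum_range_of_sum_range_le (u := fun n ↦ (L n : ℝ))
    (v := fun n ↦ 2 * α ^ n) (k := k) (m := 2 - k)
    (fun j hj ↦ ?_) (fun j _ ↦ ?_) (fun j hj hjk ↦ ?_) n hn
  · exact_mod_cast (hL.apply_eq_sum_range (by omega)).le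
  · rw [← mul_sum, sum_range_zpow_sub_of_pow_eq_geom_sum hα0.ne' hroot]
  · obtain hneg | rfl | rfl : j ≤ -1 ∨ j = 0 ∨ j = 1 := by omega
    · rw [hL.apply_eq_zero j hj hneg, Int.cast_zero]
      positivity
    · simp [hL.apply_zero]
    · simpa [hL.apply_one] using hα

lemma zpow_sub_one_le (hL : IsGeneralizedLucas k L) (hk : 1 ≤ k) {α : ℝ} (hα0 : 0 < α)
    (hα2 : α ≤ 2) (hroot : α ^ k = ∑ i ∈ range k, α ^ i) (n : ℤ) (hn : 1 ≤ n) :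
    α ^ (n - 1) ≤ L n := by
  refine le_of_le_sum_range_of_sum_range_le (u := fun n ↦ α ^ (n - 1))
    (v := fun n ↦ (L n : ℝ)) (k := k) (m := 1)
    (fun j _ ↦ ?_) (fun j hj ↦ ?_) (fun j hj hjk ↦ ?_) n hn
  · refine (sum_range_zpow_sub_of_pow_eq_geom_sum hα0.ne' hroot (j - 1)).ge.trans_eq ?_
    exact sum_congr rfl fun i _ ↦ by rw [sub_right_comm]
  · exact_mod_cast (hL.apply_eq_sum_range (by omega)).ge
  · calc α ^ (j - 1) ≤ 2 ^ (j - 1) := zpow_le_zpow_left₀ (by omega) hα0.le hα2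
      _ ≤ L j := hL.two_pow_le hj (by omega)

end IsGeneralizedLucas

/-- For k ≥ 2 and n ≥ 1, α^(n-1) ≤ L_n^(k) ≤ 2·α^n, where α is the unique real
    root of x^k − x^(k−1) − ... − x − 1 in (1, 2). -/
theorem lucas_bounds (k : ℕ) (hk : 2 ≤ k) (L : ℤ → ℤ)
    (hinit : ∀ j : ℤ, 2 - (k : ℤ) ≤ j → j ≤ -1 → L j = 0)
    (hL0 : L 0 = 2) (hL1 : L 1 = 1)
    (hrec : ∀ n : ℤ, 2 ≤ n → L n = ∑ i ∈ Finset.Icc (1 : ℤ) (k : ℤ), L (n - i))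
    (α : ℝ) (hα1 : 1 < α) (hα2 : α < 2)
    (hroot : α ^ k = ∑ i ∈ Finset.range k, α ^ i)
    (n : ℤ) (hn : 1 ≤ n) :
    α ^ (n - 1) ≤ (L n : ℝ) ∧ (L n : ℝ) ≤ 2 * α ^ n := by
  have hL : IsGeneralizedLucas k L := ⟨hinit, hL0, hL1, hrec⟩
  exact ⟨hL.zpow_sub_one_le (by omega) (by linarith) hα2.le hroot n hn,
    hL.le_two_mul_zpow (by linarith) hroot n (by omega)⟩
end

section
/- For every integer k ≥ 2, the polynomial Ψ_k(x) = x^k − x^(k−1) − ... − x − 1 has exactly one root (counted among all complex roots) of absolute value greater than 1; all other roots lie strictly inside the unit circle. -/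
/-!
Since `(x - 1) Ψ_k(x) = x^(k+1) - 2x^k + 1`, every root `z` of `Ψ_k` satisfies `z^k (2 - z) = 1`.
If `t = ‖z‖ ≥ 1`, the triangle inequality applied to `z^k = ∑_{i<k} z^i` gives `Ψ_k(t) ≤ 0`, hence
`t^k (2 - t) ≥ 1 = t^k ‖2 - z‖`, i.e. `‖2 - z‖ ≤ 2 - ‖z‖`. This forces `z = t` to be a positive real
root, and `Ψ_k` has only one positive root because `Ψ_k(t) / t^k = 1 - ∑_{j=1}^k t^(-j)` is strictly
increasing; an intermediate value argument on `[1, 2]` shows that this root exceeds `1`.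
-/

open Finset

theorem pow_mul_two_sub_eq_one {R : Type*} [CommRing R] {x : R} {k : ℕ}
    (hx : x ^ k = ∑ i ∈ range k, x ^ i) : x ^ k * (2 - x) = 1 := by
  linear_combination (1 - x) * hx - geom_sum_mul x k

theorem one_le_pow_mul_two_sub {t : ℝ} {k : ℕ} (ht : 1 ≤ t)
    (hle : t ^ k ≤ ∑ i ∈ range k, t ^ i) : 1 ≤ t ^ k * (2 - t) := by
  nlinarith [geom_sum_mul t k, mul_le_mul_of_nonneg_right hle (sub_nonneg.2 ht)]

theorem sum_range_pow_lt_pow {s t : ℝ} {k : ℕ} (hk : 0 < k) (hs : 0 < s) (hst : s < t)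
    (hs_le : ∑ i ∈ range k, s ^ i ≤ s ^ k) : ∑ i ∈ range k, t ^ i < t ^ k := by
  have hr : 1 < t / s := (one_lt_div hs).2 hst
  calc ∑ i ∈ range k, t ^ i = ∑ i ∈ range k, (t / s) ^ i * s ^ i := by
        refine sum_congr rfl fun i _ => ?_
        rw [← mul_pow, div_mul_cancel₀ t hs.ne']
    _ < ∑ i ∈ range k, (t / s) ^ k * s ^ i := by
        refine sum_lt_sum_of_nonempty (nonempty_range_iff.2 hk.ne') fun i hi => ?_
        gcongr
        exact mem_range.1 hi
    _ = (t / s) ^ k * ∑ i ∈ range k, s ^ i := (mul_sum ..).symm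
    _ ≤ (t / s) ^ k * s ^ k := by gcongr
    _ = t ^ k := by rw [← mul_pow, div_mul_cancel₀ t hs.ne']

theorem eq_of_pow_eq_sum_range_pow {s t : ℝ} {k : ℕ} (hk : 0 < k) (hs : 0 < s) (ht : 0 < t)
    (hs_root : s ^ k = ∑ i ∈ range k, s ^ i) (ht_root : t ^ k = ∑ i ∈ range k, t ^ i) :
    s = t := by
  rcases lt_trichotomy s t with h | h | h
  · exact absurd ht_root (sum_range_pow_lt_pow hk hs h hs_root.ge).ne'
  · exact h
  · exact absurd hs_root (sum_range_pow_lt_pow hk ht h ht_root.ge).ne'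

theorem exists_one_lt_pow_eq_sum_range_pow {k : ℕ} (hk : 2 ≤ k) :
    ∃ α : ℝ, 1 < α ∧ α ^ k = ∑ i ∈ range k, α ^ i := by
  have hcont : ContinuousOn (fun t : ℝ => t ^ k - ∑ i ∈ range k, t ^ i) (Set.Icc 1 2) := by
    fun_prop
  have h2 : (2 : ℝ) ^ k - ∑ i ∈ range k, (2 : ℝ) ^ i = 1 := by
    linarith [geom_sum_mul (2 : ℝ) k]
  obtain ⟨α, hα, hroot⟩ := intermediate_value_Ioo (by norm_num : (1 : ℝ) ≤ 2) hcont
    (show (0 : ℝ) ∈ Set.Ioo _ _ by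
      simp only [one_pow, sum_const, card_range, nsmul_eq_mul, mul_one, h2]
      exact ⟨by linarith [show (2 : ℝ) ≤ k by exact_mod_cast hk], one_pos⟩)
  exact ⟨α, hα.1, sub_eq_zero.1 hroot⟩

theorem Complex.eq_norm_of_norm_sub_le {c : ℝ} {z : ℂ} (h : ‖(c : ℂ) - z‖ ≤ c - ‖z‖) :
    z = ‖z‖ := by
  have hsq := pow_le_pow_left₀ (norm_nonneg _) h 2
  have hz := Complex.sq_norm z
  rw [Complex.sq_norm, Complex.normSq_apply] at hsq
  rw [Complex.normSq_apply] at hz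
  simp only [Complex.sub_re, Complex.ofReal_re, Complex.sub_im, Complex.ofReal_im] at hsq
  have hre : z.re ≤ ‖z‖ := Complex.re_le_norm z
  have hre_eq : z.re = ‖z‖ := by nlinarith [norm_nonneg ((c : ℂ) - z), norm_nonneg z]
  have him : z.im = 0 := mul_self_eq_zero.1 (by rw [hre_eq] at hz; linarith)
  exact Complex.ext (by simp [hre_eq]) (by simp [him])

theorem Complex.eq_norm_of_pow_eq_sum_range_pow {z : ℂ} {k : ℕ}
    (hz : z ^ k = ∑ i ∈ range k, z ^ i) (h1 : 1 ≤ ‖z‖) : z = ‖z‖ := by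
  have hnorm : ‖z‖ ^ k * ‖2 - z‖ = 1 := by
    simpa using congrArg norm (pow_mul_two_sub_eq_one hz)
  have htri : ‖z‖ ^ k ≤ ∑ i ∈ range k, ‖z‖ ^ i := by
    simpa [← norm_pow, hz] using norm_sum_le (range k) (z ^ ·)
  have hge := one_le_pow_mul_two_sub h1 htri
  have hpos : 0 < ‖z‖ ^ k := by positivity
  refine Complex.eq_norm_of_norm_sub_le (c := 2) ?_
  push_cast
  nlinarith

/-- For k ≥ 2, the polynomial Ψ_k(x) = x^k − x^(k−1) − ... − x − 1 has exactly
    one complex root of absolute value greater than 1; all other roots lie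
    strictly inside the unit circle. -/
theorem psi_dominant_root (k : ℕ) (hk : 2 ≤ k) :
    ∃ α : ℂ, (α ^ k = ∑ i ∈ Finset.range k, α ^ i) ∧ 1 < ‖α‖ ∧
      ∀ z : ℂ, z ^ k = ∑ i ∈ Finset.range k, z ^ i → z ≠ α → ‖z‖ < 1 := by
  obtain ⟨α, hα1, hα⟩ := exists_one_lt_pow_eq_sum_range_pow hk
  refine ⟨α, by exact_mod_cast hα, by simpa [abs_of_pos (one_pos.trans hα1)], ?_⟩
  intro z hz hne
  by_contra! h1
  have hz_real := Complex.eq_norm_of_pow_eq_sum_range_pow hz h1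
  have hroot : ‖z‖ ^ k = ∑ i ∈ range k, ‖z‖ ^ i := by
    rw [hz_real] at hz
    exact_mod_cast hz
  refine hne ?_
  rw [hz_real, eq_of_pow_eq_sum_range_pow (by omega) (by linarith) (by linarith) hroot hα]
end

section
/- For k ≥ 2, the k-generalized Lucas number admits the Binet-like formula L_n^(k) = Σ_{i=1}^{k} (2α_i − 1) f_k(α_i) α_i^(n−1), where α_1, ..., α_k are the roots of Ψ_k(x) and f_k(x) = (x−1)/(2 + (k+1)(x−2)). -/
/-!
Let `w_i = 1 / Ψ_k'(α_i)` be the weights of Lagrange interpolation at the roots. Differentiating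
`(x - 1) Ψ_k(x) = x^(k+1) - 2 x^k + 1` at a root gives `f_k(α_i) = w_i α_i^(k-1)`, so the
right-hand side is `∑ w_i (2 α_i - 1) α_i^(n+k-2)`. Each `n ↦ α_i^n` satisfies the `k`-term
recurrence on all of `ℤ`, so it suffices to match the `k` initial values `2 - k ≤ n ≤ 1`.
There only the power sums `∑ w_i α_i^t` with `t ≤ k` occur: for `t < k` such a sum is the
coefficient of `x^(k-1)` in the interpolant of `x^t`, i.e. `1` if `t = k - 1` and `0`
otherwise, and for `t = k` it is `1` after reducing `α_i^k` by `Ψ_k`.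
-/

open Polynomial Finset Lagrange

noncomputable def kbonacciPoly (R : Type*) [Ring R] (k : ℕ) : R[X] :=
  X ^ k - ∑ j ∈ range k, X ^ j

section KbonacciPoly

variable {R : Type*} [CommRing R] {k : ℕ} {a : R}

theorem degree_sum_range_X_pow_lt : (∑ j ∈ range k, (X : R[X]) ^ j).degree < k :=
  mem_degreeLT.mp <| sum_mem fun j hj =>
    mem_degreeLT.mpr <| (degree_X_pow_le j).trans_lt (by exact_mod_cast mem_range.mp hj)

theorem kbonacciPoly_monic : (kbonacciPoly R k).Monic :=
  monic_X_pow_sub degree_sum_range_X_pow_lt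

theorem degree_kbonacciPoly [Nontrivial R] : (kbonacciPoly R k).degree = k := by
  rw [kbonacciPoly, degree_sub_eq_left_of_degree_lt] <;> rw [degree_X_pow]
  exact degree_sum_range_X_pow_lt

theorem isRoot_kbonacciPoly : (kbonacciPoly R k).IsRoot a ↔ a ^ k = ∑ j ∈ range k, a ^ j := by
  simp [kbonacciPoly, eval_finsetSum, sub_eq_zero]

theorem X_sub_one_mul_kbonacciPoly :
    (X - 1) * kbonacciPoly R k = X ^ (k + 1) - 2 * X ^ k + 1 := by
  rw [kbonacciPoly, mul_sub, mul_geom_sum]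
  ring

theorem sub_one_mul_eval_derivative_kbonacciPoly (ha : (kbonacciPoly R k).IsRoot a) :
    (a - 1) * (derivative (kbonacciPoly R k)).eval a = (k + 1) * a ^ k - 2 * k * a ^ (k - 1) := by
  have h := congrArg (fun p => (derivative p).eval a) (X_sub_one_mul_kbonacciPoly (R := R) (k := k))
  simp only [derivative_mul, derivative_sub, derivative_add, derivative_X, derivative_one,
    derivative_X_pow, derivative_ofNat, eval_add, eval_sub, eval_mul, eval_X, eval_one, eval_C,
    eval_pow, eval_zero, eval_ofNat, ha.eq_zero] at h
  push_cast at h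
  linear_combination h

theorem ne_zero_of_isRoot_kbonacciPoly [Nontrivial R] (ha : (kbonacciPoly R k).IsRoot a) :
    a ≠ 0 := by
  rintro rfl
  rw [isRoot_kbonacciPoly] at ha
  cases k <;> simp [sum_range_succ'] at ha

theorem ne_one_of_isRoot_kbonacciPoly [CharZero R] (hk : k ≠ 1)
    (ha : (kbonacciPoly R k).IsRoot a) : a ≠ 1 := by
  rintro rfl
  have h := isRoot_kbonacciPoly.1 ha
  simp only [one_pow, sum_const, card_range, nsmul_eq_mul, mul_one] at h
  exact hk (by exact_mod_cast h.symm)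

end KbonacciPoly

theorem sub_one_div_eq_inv_eval_derivative_kbonacciPoly_mul {F : Type*} [Field F] [CharZero F]
    {k : ℕ} {a : F} (hk : 2 ≤ k) (ha : (kbonacciPoly F k).IsRoot a)
    (hD : (derivative (kbonacciPoly F k)).eval a ≠ 0) :
    (a - 1) / (2 + (k + 1) * (a - 2)) =
      ((derivative (kbonacciPoly F k)).eval a)⁻¹ * a ^ (k - 1) := by
  have h := sub_one_mul_eval_derivative_kbonacciPoly ha
  have hpow : a ^ k = a ^ (k - 1) * a := by rw [← pow_succ, Nat.sub_add_cancel (by omega)]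
  have ha1 : a - 1 ≠ 0 := sub_ne_zero.2 (ne_one_of_isRoot_kbonacciPoly (by omega) ha)
  have hden : 2 + (k + 1) * (a - 2) ≠ 0 := by
    intro h0
    apply mul_ne_zero ha1 hD
    rw [h, hpow]
    linear_combination a ^ (k - 1) * h0
  field_simp
  linear_combination h + (k + 1) * hpow

section Nodal

variable {F ι : Type*} [Field F] {s : Finset ι} {v : ι → F}

theorem nodal_eq_of_monic {p : F[X]} (hvs : Set.InjOn v s) (hp : p.Monic) (hdeg : p.degree = #s)
    (hroots : ∀ i ∈ s, p.IsRoot (v i)) : nodal s v = p := by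
  refine eq_of_degree_le_of_eval_index_eq s hvs degree_nodal.le (by rw [degree_nodal, hdeg])
    (by rw [nodal_monic.leadingCoeff, hp.leadingCoeff]) fun i hi => ?_
  rw [eval_nodal_at_node hi, (hroots i hi).eq_zero]

variable [DecidableEq ι]

theorem sum_nodalWeight_mul_pow (hvs : Set.InjOn v s) {t : ℕ} (ht : t < #s) :
    ∑ i ∈ s, nodalWeight s v i * v i ^ t = if t = #s - 1 then 1 else 0 := by
  have h := coeff_eq_sum hvs (P := X ^ t) (by rw [degree_X_pow]; exact_mod_cast ht)
  simp only [coeff_X_pow, eval_pow, eval_X, eq_comm (a := #s - 1)] at h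
  simp only [h, nodalWeight, prod_inv_distrib, div_eq_inv_mul]

variable {k : ℕ}

theorem nodalWeight_eq_inv_eval_derivative_kbonacciPoly (hvs : Set.InjOn v s) (hs : #s = k)
    (hroots : ∀ i ∈ s, (kbonacciPoly F k).IsRoot (v i)) {i : ι} (hi : i ∈ s) :
    nodalWeight s v i = ((derivative (kbonacciPoly F k)).eval (v i))⁻¹ := by
  rw [nodalWeight_eq_eval_derivative_nodal hi,
    nodal_eq_of_monic hvs kbonacciPoly_monic (by rw [degree_kbonacciPoly, hs]) hroots]

theorem sub_one_div_eq_nodalWeight_mul_pow [CharZero F] (hk : 2 ≤ k) (hvs : Set.InjOn v s)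
    (hs : #s = k) (hroots : ∀ i ∈ s, (kbonacciPoly F k).IsRoot (v i)) {i : ι} (hi : i ∈ s) :
    (v i - 1) / (2 + (k + 1) * (v i - 2)) = nodalWeight s v i * v i ^ (k - 1) := by
  have hw := nodalWeight_eq_inv_eval_derivative_kbonacciPoly hvs hs hroots hi
  rw [hw]
  refine sub_one_div_eq_inv_eval_derivative_kbonacciPoly_mul hk (hroots i hi) fun h0 => ?_
  exact nodalWeight_ne_zero hvs hi (by rw [hw, h0, inv_zero])

theorem sum_nodalWeight_mul_pow_self (hk : k ≠ 0) (hvs : Set.InjOn v s) (hs : #s = k)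
    (hroots : ∀ i ∈ s, (kbonacciPoly F k).IsRoot (v i)) :
    ∑ i ∈ s, nodalWeight s v i * v i ^ k = 1 := by
  calc ∑ i ∈ s, nodalWeight s v i * v i ^ k
      = ∑ j ∈ range k, ∑ i ∈ s, nodalWeight s v i * v i ^ j := by
        rw [sum_comm]
        refine sum_congr rfl fun i hi => ?_
        rw [isRoot_kbonacciPoly.1 (hroots i hi), mul_sum]
    _ = 1 := by
        rw [sum_congr rfl fun j hj => sum_nodalWeight_mul_pow hvs (hs ▸ mem_range.1 hj), hs,
          sum_ite_eq' (range k), if_pos (mem_range.2 (by omega))]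

end Nodal

theorem sum_Icc_one_eq_sum_range {M : Type*} [AddCommMonoid M] (f : ℤ → M) (k : ℕ) :
    ∑ i ∈ Icc (1 : ℤ) k, f i = ∑ j ∈ range k, f (k - j) := by
  refine sum_nbij' (fun i => (k - i).toNat) (fun j => k - j) (fun i hi => ?_) (fun j hj => ?_)
    (fun i hi => ?_) (fun j hj => ?_) (fun i hi => congrArg f ?_) <;>
    simp only [mem_Icc, mem_range] at * <;> omega

theorem zpow_eq_sum_Icc_zpow_sub {K : Type*} [DivisionRing K] {a : K} {k : ℕ} (ha : a ≠ 0)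
    (h : a ^ k = ∑ j ∈ range k, a ^ j) (m : ℤ) :
    a ^ m = ∑ i ∈ Icc (1 : ℤ) k, a ^ (m - i) := by
  calc a ^ m = a ^ (m - k) * a ^ k := by rw [← zpow_natCast, ← zpow_add₀ ha, sub_add_cancel]
    _ = ∑ j ∈ range k, a ^ (m - (k - j : ℤ)) := by
        rw [h, mul_sum]
        refine sum_congr rfl fun j _ => ?_
        rw [← zpow_natCast, ← zpow_add₀ ha, sub_sub_eq_add_sub, add_sub_right_comm]
    _ = ∑ i ∈ Icc (1 : ℤ) k, a ^ (m - i) :=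
        (sum_Icc_one_eq_sum_range (fun i => a ^ (m - i)) k).symm

theorem eq_of_sum_Icc_recurrence {M : Type*} [AddCommMonoid M] {u v : ℤ → M} {k : ℕ} {a : ℤ}
    (hu : ∀ n, a + k ≤ n → u n = ∑ i ∈ Icc (1 : ℤ) k, u (n - i))
    (hv : ∀ n, a + k ≤ n → v n = ∑ i ∈ Icc (1 : ℤ) k, v (n - i))
    (hinit : ∀ n, a ≤ n → n < a + k → u n = v n) {n : ℤ} (hn : a ≤ n) : u n = v n := by
  obtain ⟨t, rfl⟩ : ∃ t : ℕ, n = a + t := ⟨(n - a).toNat, by omega⟩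
  induction t using Nat.strong_induction_on with
  | _ t ih =>
    by_cases ht : t < k
    · exact hinit _ hn (by omega)
    rw [hu _ (by omega), hv _ (by omega)]
    refine sum_congr rfl fun i hi => ?_
    have hi := mem_Icc.1 hi
    obtain ⟨s, hs⟩ : ∃ s : ℕ, a + t - i = a + s := ⟨(t - i).toNat, by omega⟩
    rw [hs]
    exact ih s (by omega) (by omega)

noncomputable def lucasBinet {F ι : Type*} [Field F] (k : ℕ) (s : Finset ι) (v : ι → F)
    (n : ℤ) : F :=
  ∑ i ∈ s, (2 * v i - 1) * ((v i - 1) / (2 + (k + 1) * (v i - 2))) * v i ^ (n - 1)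

section LucasBinet

variable {F ι : Type*} [Field F] {k : ℕ} {s : Finset ι} {v : ι → F}

theorem lucasBinet_eq_sum_Icc (hroots : ∀ i ∈ s, (kbonacciPoly F k).IsRoot (v i)) (n : ℤ) :
    lucasBinet k s v n = ∑ i ∈ Icc (1 : ℤ) k, lucasBinet k s v (n - i) := by
  simp only [lucasBinet]
  rw [sum_comm]
  refine sum_congr rfl fun i hi => ?_
  rw [← mul_sum, zpow_eq_sum_Icc_zpow_sub (ne_zero_of_isRoot_kbonacciPoly (hroots i hi))
    (isRoot_kbonacciPoly.1 (hroots i hi)) (n - 1)]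
  simp only [sub_right_comm]

variable [CharZero F] [DecidableEq ι]

theorem lucasBinet_natCast_add_two_sub (hk : 2 ≤ k) (hvs : Set.InjOn v s) (hs : #s = k)
    (hroots : ∀ i ∈ s, (kbonacciPoly F k).IsRoot (v i)) (t : ℕ) :
    lucasBinet k s v (t + 2 - k) =
      2 * ∑ i ∈ s, nodalWeight s v i * v i ^ (t + 1) -
        ∑ i ∈ s, nodalWeight s v i * v i ^ t := by
  rw [lucasBinet, mul_sum, ← sum_sub_distrib]
  refine sum_congr rfl fun i hi => ?_
  have hpow : v i ^ (k - 1) * v i ^ ((t : ℤ) + 2 - k - 1) = v i ^ t := by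
    rw [← zpow_natCast, ← zpow_add₀ (ne_zero_of_isRoot_kbonacciPoly (hroots i hi)),
      ← zpow_natCast]
    congr 1
    omega
  rw [sub_one_div_eq_nodalWeight_mul_pow hk hvs hs hroots hi, pow_succ]
  linear_combination (2 * v i - 1) * nodalWeight s v i * hpow

theorem lucasBinet_of_neg (hk : 2 ≤ k) (hvs : Set.InjOn v s) (hs : #s = k)
    (hroots : ∀ i ∈ s, (kbonacciPoly F k).IsRoot (v i)) {m : ℤ} (hm₁ : 2 - k ≤ m)
    (hm₂ : m < 0) :
    lucasBinet k s v m = 0 := by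
  obtain ⟨t, rfl⟩ : ∃ t : ℕ, m = t + 2 - k := ⟨(m + k - 2).toNat, by omega⟩
  rw [lucasBinet_natCast_add_two_sub hk hvs hs hroots, sum_nodalWeight_mul_pow hvs (by omega),
    sum_nodalWeight_mul_pow hvs (by omega), if_neg (by omega), if_neg (by omega)]
  norm_num

theorem lucasBinet_zero (hk : 2 ≤ k) (hvs : Set.InjOn v s) (hs : #s = k)
    (hroots : ∀ i ∈ s, (kbonacciPoly F k).IsRoot (v i)) : lucasBinet k s v 0 = 2 := by
  obtain ⟨t, ht⟩ : ∃ t : ℕ, t + 2 = k := ⟨k - 2, by omega⟩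
  rw [show (0 : ℤ) = t + 2 - k by omega, lucasBinet_natCast_add_two_sub hk hvs hs hroots,
    sum_nodalWeight_mul_pow hvs (by omega), sum_nodalWeight_mul_pow hvs (by omega),
    if_pos (by omega), if_neg (by omega)]
  norm_num

theorem lucasBinet_one (hk : 2 ≤ k) (hvs : Set.InjOn v s) (hs : #s = k)
    (hroots : ∀ i ∈ s, (kbonacciPoly F k).IsRoot (v i)) : lucasBinet k s v 1 = 1 := by
  obtain ⟨t, ht⟩ : ∃ t : ℕ, t + 1 = k := ⟨k - 1, by omega⟩
  rw [show (1 : ℤ) = t + 2 - k by omega, lucasBinet_natCast_add_two_sub hk hvs hs hroots, ht,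
    sum_nodalWeight_mul_pow_self (by omega) hvs hs hroots,
    sum_nodalWeight_mul_pow hvs (by omega), if_pos (by omega)]
  norm_num

end LucasBinet

/-- Binet-like formula: L_n^(k) = Σ_{i=1}^{k} (2α_i − 1) f_k(α_i) α_i^(n−1),
    where α_1, ..., α_k are the (distinct) complex roots of Ψ_k and
    f_k(x) = (x−1)/(2 + (k+1)(x−2)). -/
theorem lucas_binet (k : ℕ) (hk : 2 ≤ k) (L : ℤ → ℤ)
    (hinit : ∀ j : ℤ, 2 - (k : ℤ) ≤ j → j ≤ -1 → L j = 0)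
    (hL0 : L 0 = 2) (hL1 : L 1 = 1)
    (hrec : ∀ n : ℤ, 2 ≤ n → L n = ∑ i ∈ Finset.Icc (1 : ℤ) (k : ℤ), L (n - i))
    (αs : Fin k → ℂ) (hinj : Function.Injective αs)
    (hroots : ∀ i, (αs i) ^ k = ∑ j ∈ Finset.range k, (αs i) ^ j)
    (n : ℤ) (hn : 2 - (k : ℤ) ≤ n) :
    (L n : ℂ) = ∑ i : Fin k,
      (2 * αs i - 1) * ((αs i - 1) / (2 + (k + 1) * (αs i - 2))) * (αs i) ^ (n - 1) := by
  have hvs : Set.InjOn αs (univ : Finset (Fin k)) := hinj.injOn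
  have hs : #(univ : Finset (Fin k)) = k := card_fin k
  have hα : ∀ i ∈ univ, (kbonacciPoly ℂ k).IsRoot (αs i) :=
    fun i _ => isRoot_kbonacciPoly.2 (hroots i)
  refine eq_of_sum_Icc_recurrence (a := 2 - k) (u := fun m => (L m : ℂ))
    (v := lucasBinet k univ αs) (fun m hm => by exact_mod_cast hrec m (by omega))
    (fun m _ => lucasBinet_eq_sum_Icc hα m) (fun m hm₁ hm₂ => ?_) hn
  rcases lt_trichotomy m 0 with hm | rfl | hm
  · rw [hinit m hm₁ (by omega), lucasBinet_of_neg hk hvs hs hα hm₁ hm, Int.cast_zero]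
  · rw [hL0, lucasBinet_zero hk hvs hs hα, Int.cast_ofNat]
  · obtain rfl : m = 1 := by omega
    rw [hL1, lucasBinet_one hk hvs hs hα, Int.cast_one]
end

section
/- Let M be a positive integer, let p/q be a convergent of the continued fraction of an irrational number γ with q > 6M, and let A > 0, B > 1, μ be real numbers. Set ε := ‖μq‖ − M‖γq‖, where ‖·‖ denotes distance to the nearest integer. If ε > 0, then there is no solution to 0 < uγ − v + μ < A·B^(−w) in positive integers u, v, w with u ≤ M and w ≥ log(Aq/ε)/log B. -/
/-- Baker–Davenport reduction (Dujella–Pethő variant). If p/q is a convergent of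
    the continued fraction of the irrational γ with q > 6M, A > 0, B > 1, and
    ε := ‖μq‖ − M‖γq‖ > 0 (‖·‖ being the distance to the nearest integer), then
    there is no solution to 0 < uγ − v + μ < A·B^(−w) in positive integers
    u, v, w with u ≤ M and w ≥ log(Aq/ε)/log B. -/
theorem baker_davenport_reduction (γ : ℝ) (hγ : Irrational γ)
    (M : ℕ) (hM : 0 < M) (p : ℤ) (q : ℕ) (hq : 6 * M < q)
    (hconv : ∃ i : ℕ, (GenContFract.of γ).convs i = (p : ℝ) / (q : ℝ))
    (A B μ : ℝ) (hA : 0 < A) (hB : 1 < B)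
    (ε : ℝ) (hε : ε = |μ * q - round (μ * q)| - M * |γ * q - round (γ * q)|)
    (hεpos : 0 < ε) :
    ¬ ∃ u v w : ℕ, 0 < u ∧ 0 < v ∧ 0 < w ∧ u ≤ M ∧
        Real.log (A * q / ε) / Real.log B ≤ (w : ℝ) ∧
        0 < (u : ℝ) * γ - (v : ℝ) + μ ∧
        (u : ℝ) * γ - (v : ℝ) + μ < A * B ^ (-(w : ℤ)) := by
  rintro ⟨u, v, w, hu, hv, hw, huM, hwlog, hx0, hxA⟩
  have hq0 : 0 < q := by omega
  have hqR : (0:ℝ) < (q:ℝ) := by exact_mod_cast hq0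
  set δ : ℝ := γ * q - round (γ * q) with hδdef
  set η : ℝ := μ * q - round (μ * q) with hηdef
  have hη2 : |η| ≤ 1/2 := abs_sub_round _
  set x : ℝ := (u:ℝ) * γ - (v:ℝ) + μ with hxdef
  have hqxpos : 0 < (q:ℝ) * x := mul_pos hqR hx0
  -- From the logarithmic bound, q * x < ε
  have hlogB : 0 < Real.log B := Real.log_pos hB
  have hAqε : 0 < A * q / ε := by positivity
  have hBw : A * q / ε ≤ B ^ w := by
    have h1 : Real.log (A * q / ε) ≤ (w:ℝ) * Real.log B := by
      rw [div_le_iff₀ hlogB] at hwlog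
      linarith
    calc A * q / ε = Real.exp (Real.log (A * q / ε)) := (Real.exp_log hAqε).symm
      _ ≤ Real.exp ((w:ℝ) * Real.log B) := Real.exp_le_exp.mpr h1
      _ = B ^ (w:ℝ) := by
          rw [Real.rpow_def_of_pos (by linarith : (0:ℝ) < B)]
          ring_nf
      _ = B ^ w := Real.rpow_natCast B w
  have hBwpos : (0:ℝ) < B ^ w := by positivity
  have hABw : A * B ^ (-(w : ℤ)) ≤ ε / q := by
    rw [zpow_neg, zpow_natCast, ← div_eq_mul_inv, div_le_div_iff₀ hBwpos hqR]
    calc A * q ≤ (A * q / ε) * ε := by rw [div_mul_cancel₀]; exact ne_of_gt hεpos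
      _ ≤ B ^ w * ε := by nlinarith
      _ = ε * B ^ w := by ring
  have hqx : (q:ℝ) * x < ε := by
    have h2 : x < ε / q := lt_of_lt_of_le hxA hABw
    calc (q:ℝ) * x < (q:ℝ) * (ε / q) := by exact mul_lt_mul_of_pos_left h2 hqR
      _ = ε := by field_simp
  -- the key integer
  set k : ℤ := (u : ℤ) * round (γ * q) - (v : ℤ) * (q : ℤ) + round (μ * q) with hkdef
  have hkey : (q:ℝ) * x = (k:ℝ) + (u:ℝ) * δ + η := by
    simp only [hkdef, hxdef, hδdef, hηdef]
    push_cast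
    ring
  have t2 : |(u:ℝ) * δ| ≤ (M:ℝ) * |δ| := by
    rw [abs_mul, Nat.abs_cast]
    exact mul_le_mul_of_nonneg_right (by exact_mod_cast huM) (abs_nonneg _)
  have t1 : |η| ≤ |(u:ℝ) * δ + η| + |(u:ℝ) * δ| := by
    have h := abs_add_le ((u:ℝ) * δ + η) (-((u:ℝ) * δ))
    rw [abs_neg] at h
    have e : (u:ℝ) * δ + η + -((u:ℝ) * δ) = η := by ring
    rw [e] at h
    exact h
  rcases eq_or_ne k 0 with hk | hk
  · -- k = 0 : q x = u δ + η has absolute value ≥ ε, contradiction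
    have e : (q:ℝ) * x = (u:ℝ) * δ + η := by rw [hkey, hk]; simp
    have habs : |(u:ℝ) * δ + η| = (u:ℝ) * δ + η := abs_of_pos (e ▸ hqxpos)
    -- ε ≤ |η| - M|δ| ≤ |uδ+η| = qx < ε
    linarith [hε, t1, t2, e ▸ hqx]
  · -- k ≠ 0 : 1 ≤ |k| ≤ qx + |uδ+η| < 2|η| ≤ 1
    have hk1 : (1:ℝ) ≤ |(k:ℝ)| := by
      rw [← Int.cast_abs]
      exact_mod_cast Int.one_le_abs hk
    have e : (k:ℝ) = (q:ℝ) * x - ((u:ℝ) * δ + η) := by linarith [hkey]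
    have t3 : |(k:ℝ)| ≤ |(q:ℝ) * x| + |(u:ℝ) * δ + η| := by
      rw [e]
      exact abs_sub _ _
    have t4 : |(u:ℝ) * δ + η| ≤ |(u:ℝ) * δ| + |η| := abs_add_le _ _
    rw [abs_of_pos hqxpos] at t3
    linarith [hε, hqx, t2, hη2]
end

section
/- For every integer k ≥ 3, if α is the dominant root of Ψ_k(x) then 1/f_k(α) < 4 and 1/log α < 2, where f_k(x) = (x−1)/(2 + (k+1)(x−2)). -/
/-!
Summing the geometric series turns `α ^ k = ∑_{i<k} α ^ i` into `α ^ k (2 - α) = 1`; since every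
term of the sum is at least `1`, `α ^ k ≥ k ≥ 3`, so `2 - α ≤ 1/3` and `α ≥ 5/3 > √e`, which gives
`log α > 1/2`. The bound on `1 / f_k(α)` needs only `1 < α < 2` and `k + 1 ≥ 4`.
-/

theorem pow_mul_two_sub_eq_one_of_pow_eq_geom_sum {R : Type*} [CommRing R] {x : R} {k : ℕ}
    (h : x ^ k = ∑ i ∈ Finset.range k, x ^ i) : x ^ k * (2 - x) = 1 := by
  have hgeom := geom_sum_mul x k
  rw [← h] at hgeom
  linear_combination -hgeom

theorem natCast_le_geom_sum {x : ℝ} (hx : 1 ≤ x) (k : ℕ) :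
    (k : ℝ) ≤ ∑ i ∈ Finset.range k, x ^ i := by
  simpa using Finset.sum_le_sum fun i (_ : i ∈ Finset.range k) => one_le_pow₀ hx

theorem five_thirds_le_of_pow_eq_geom_sum {x : ℝ} {k : ℕ} (hk : 3 ≤ k) (hx : 1 ≤ x)
    (h : x ^ k = ∑ i ∈ Finset.range k, x ^ i) : 5 / 3 ≤ x := by
  have hpow : (3 : ℝ) ≤ x ^ k := by
    calc (3 : ℝ) ≤ k := by exact_mod_cast hk
      _ ≤ x ^ k := h ▸ natCast_le_geom_sum hx k
  have hone := pow_mul_two_sub_eq_one_of_pow_eq_geom_sum h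
  nlinarith

theorem Real.exp_one_half_lt_five_thirds : Real.exp (1 / 2) < 5 / 3 := by
  have hsq : Real.exp (1 / 2) ^ 2 = Real.exp 1 := by
    rw [← Real.exp_nat_mul]; norm_num
  nlinarith [Real.exp_pos (1 / 2), Real.exp_one_lt_d9]

theorem one_half_lt_log_of_five_thirds_le {x : ℝ} (hx : 5 / 3 ≤ x) : 1 / 2 < Real.log x := by
  rw [Real.lt_log_iff_exp_lt (by linarith)]
  exact Real.exp_one_half_lt_five_thirds.trans_le hx

theorem two_add_mul_sub_two_div_sub_one_lt_four {k x : ℝ} (hk : 3 ≤ k) (hx1 : 1 < x) (hx2 : x < 2) :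
    (2 + (k + 1) * (x - 2)) / (x - 1) < 4 := by
  rw [div_lt_iff₀ (by linarith)]
  nlinarith [mul_le_mul_of_nonpos_right (show (4 : ℝ) ≤ k + 1 by linarith)
    (show x - 2 ≤ 0 by linarith)]

/-- For k ≥ 3, if α is the dominant root of Ψ_k, then 1/f_k(α) < 4 and
    1/log α < 2, where f_k(x) = (x−1)/(2 + (k+1)(x−2)). -/
theorem lucas_fk_log_bounds (k : ℕ) (hk : 3 ≤ k)
    (α : ℝ) (hα1 : 1 < α) (hα2 : α < 2)
    (hroot : α ^ k = ∑ i ∈ Finset.range k, α ^ i) :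
    1 / ((α - 1) / (2 + (k + 1) * (α - 2))) < 4 ∧ 1 / Real.log α < 2 := by
  refine ⟨?_, ?_⟩
  · rw [one_div_div]
    exact two_add_mul_sub_two_div_sub_one_lt_four (by exact_mod_cast hk) hα1 hα2
  · have hlog := one_half_lt_log_of_five_thirds_le
      (five_thirds_le_of_pow_eq_geom_sum hk hα1.le hroot)
    rw [div_lt_iff₀ (by linarith)]
    linarith
end

section
/- For integers k > ℓ ≥ 2, the number log α(k) / log α(ℓ) is irrational, where α(s) denotes the dominant root of Ψ_s(x) = x^s − x^(s−1) − ... − x − 1. -/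
/-!
If `log α / log β = p / q`, then `α ^ q = β ^ p`. Apart from its positive root, every complex root
of `Ψ_s` lies in the open unit disc, and the power sums of the roots of a monic integer
polynomial are integers. Hence the integers
`∑_{Ψ_k(z) = 0} z ^ (q n) - ∑_{Ψ_ℓ(w) = 0} w ^ (p n)` tend to `0` (the dominant terms
`α ^ (q n) = β ^ (p n)` cancel) and so vanish for large `n`. They satisfy a linear recurrence
with nonzero constant coefficient, which can be run backwards down to `n = 0`, where the
difference is `k - ℓ`.
-/

open Polynomial Filter Topology Finset

theorem ne_zero_of_pow_eq_geom_sum {R : Type*} [Semiring R] [Nontrivial R] {x : R} {s : ℕ}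
    (hroot : x ^ s = ∑ i ∈ range s, x ^ i) : s ≠ 0 := by
  rintro rfl
  simp at hroot

theorem geom_sum_lt_pow_of_lt {K : Type*} [CommRing K] [LinearOrder K] [IsStrictOrderedRing K]
    {x y : K} {s : ℕ} (hx : 0 < x) (hxy : x < y) (hroot : x ^ s = ∑ i ∈ range s, x ^ i) :
    ∑ i ∈ range s, y ^ i < y ^ s := by
  have hs : (range s).Nonempty := nonempty_range_iff.mpr (ne_zero_of_pow_eq_geom_sum hroot)
  have hy : 0 < y := hx.trans hxy
  have hterm : ∀ i ∈ range s, x ^ s * y ^ i < x ^ i * y ^ s := fun i hi => by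
    obtain ⟨j, rfl⟩ := Nat.exists_eq_add_of_lt (mem_range.mp hi)
    have : x ^ (j + 1) < y ^ (j + 1) := pow_lt_pow_left₀ hxy hx.le (by omega)
    calc x ^ (i + j + 1) * y ^ i = x ^ i * y ^ i * x ^ (j + 1) := by ring
      _ < x ^ i * y ^ i * y ^ (j + 1) := by gcongr
      _ = x ^ i * y ^ (i + j + 1) := by ring
  have := sum_lt_sum_of_nonempty hs hterm
  rw [← mul_sum, ← sum_mul, ← hroot] at this
  exact lt_of_mul_lt_mul_left this (pow_pos hx s).le

theorem eq_of_pow_eq_geom_sum {K : Type*} [CommRing K] [LinearOrder K] [IsStrictOrderedRing K]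
    {x y : K} {s : ℕ} (hx : 0 < x) (hy : 0 < y) (hxroot : x ^ s = ∑ i ∈ range s, x ^ i)
    (hyroot : y ^ s = ∑ i ∈ range s, y ^ i) : x = y := by
  rcases lt_trichotomy x y with hxy | hxy | hxy
  · exact absurd hyroot (geom_sum_lt_pow_of_lt hx hxy hxroot).ne'
  · exact hxy
  · exact absurd hxroot (geom_sum_lt_pow_of_lt hy hxy hyroot).ne'

theorem Complex.eq_norm_of_pow_eq_geom_sum {z : ℂ} {s : ℕ} (hz : z ^ s = ∑ i ∈ range s, z ^ i)
    (hnorm : 1 ≤ ‖z‖) : z = ‖z‖ := by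
  set u := ‖z‖
  have hsum_le : u ^ s ≤ ∑ i ∈ range s, u ^ i := by
    calc u ^ s = ‖∑ i ∈ range s, z ^ i‖ := by rw [← hz, norm_pow]
      _ ≤ ∑ i ∈ range s, u ^ i := by
        simpa only [norm_pow] using norm_sum_le (range s) (z ^ ·)
  -- With `hsum_le`, the identity `z ^ s * (2 - z) = 1` gives `‖2 - z‖ ≤ 2 - ‖z‖`, while
  -- `2 - ‖z‖ ≤ 2 - re z ≤ ‖2 - z‖`; so `re z = ‖z‖`.
  have hmul : z ^ s * (2 - z) = 1 := by linear_combination (1 - z) * hz - geom_sum_mul z s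
  have hnorm_mul : u ^ s * ‖2 - z‖ = 1 := by rw [← norm_pow, ← norm_mul, hmul, norm_one]
  have hlower : 1 ≤ u ^ s * (2 - u) := by
    have := geom_sum_mul u s
    nlinarith [mul_le_mul_of_nonneg_right hsum_le (sub_nonneg.mpr hnorm)]
  have hnorm_sub : ‖2 - z‖ ≤ 2 - u :=
    le_of_mul_le_mul_left (hnorm_mul.trans_le hlower) (pow_pos (by linarith) s)
  have hre : z.re = u := by
    have h1 := re_le_norm z
    have h2 := re_le_norm (2 - z)
    simp only [sub_re, re_ofNat] at h2
    linarith
  have him : z.im = 0 := by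
    have := sq_norm_sub_sq_re z
    rw [hre, sub_self] at this
    exact pow_eq_zero_iff two_ne_zero |>.mp this.symm
  exact Complex.ext (by simp [hre]) (by simp [him])

def powerSum {R : Type*} [CommSemiring R] (M : Multiset R) (n : ℕ) : R := (M.map (· ^ n)).sum

section powerSum

variable {R : Type*} [CommSemiring R]

@[simp]
theorem powerSum_zero (M : Multiset R) : powerSum M 0 = M.card := by simp [powerSum]

@[simp]
theorem powerSum_cons (a : R) (M : Multiset R) (n : ℕ) :
    powerSum (a ::ₘ M) n = a ^ n + powerSum M n := by simp [powerSum]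

theorem powerSum_map_pow (M : Multiset R) (q n : ℕ) :
    powerSum (M.map (· ^ q)) n = powerSum M (q * n) := by simp [powerSum, pow_mul]

theorem sum_coeff_mul_powerSum_eq_zero {Q : R[X]} {M : Multiset R} (hM : ∀ z ∈ M, Q.IsRoot z)
    (n : ℕ) : ∑ i ∈ range (Q.natDegree + 1), Q.coeff i * powerSum M (n + i) = 0 := by
  induction M using Multiset.induction_on with
  | empty => simp [powerSum]
  | cons a M ih =>
    simp only [powerSum_cons, mul_add, sum_add_distrib]
    rw [ih fun z hz => hM z (Multiset.mem_cons_of_mem hz), add_zero]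
    calc ∑ i ∈ range (Q.natDegree + 1), Q.coeff i * a ^ (n + i) = a ^ n * Q.eval a := by
          rw [eval_eq_sum_range, mul_sum]
          exact sum_congr rfl fun i _ => by ring
      _ = 0 := by rw [hM a (Multiset.mem_cons_self a M), mul_zero]

end powerSum

theorem tendsto_powerSum_atTop_nhds_zero {𝕜 : Type*} [NormedField 𝕜] {M : Multiset 𝕜}
    (hM : ∀ z ∈ M, ‖z‖ < 1) : Tendsto (powerSum M) atTop (𝓝 0) := by
  induction M using Multiset.induction_on with
  | empty => exact tendsto_const_nhds.congr fun n => by simp [powerSum]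
  | cons a M ih =>
    rw [show powerSum (a ::ₘ M) = fun n => a ^ n + powerSum M n from funext (powerSum_cons a M)]
    simpa only [add_zero] using
      (tendsto_pow_atTop_nhds_zero_of_norm_lt_one (hM a (Multiset.mem_cons_self a M))).add
        (ih fun z hz => hM z (Multiset.mem_cons_of_mem hz))

theorem eq_zero_of_recurrence_of_eventually_eq_zero {R : Type*} [Semiring R] [NoZeroDivisors R]
    {c u : ℕ → R} {d : ℕ} (hc : c 0 ≠ 0) (hrec : ∀ n, ∑ i ∈ range (d + 1), c i * u (n + i) = 0)
    (hu : ∀ᶠ n in atTop, u n = 0) (n : ℕ) : u n = 0 := by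
  have hstep (m : ℕ) (hm : ∀ i, u (m + i + 1) = 0) : u m = 0 := by
    have := hrec m
    rw [sum_range_succ'] at this
    simpa [← add_assoc, hm, hc] using this
  obtain ⟨N, hN⟩ := eventually_atTop.mp hu
  have hdown (j : ℕ) : ∀ m, N ≤ m + j → u m = 0 := by
    induction j with
    | zero => exact hN
    | succ j ih => exact fun m hm => hstep m fun i => ih _ (by omega)
  exact hdown N n (by omega)

theorem eventually_eq_zero_of_tendsto_intCast {u : ℕ → ℤ}
    (h : Tendsto (fun n => (u n : ℂ)) atTop (𝓝 0)) : ∀ᶠ n in atTop, u n = 0 := by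
  filter_upwards [NormedAddGroup.tendsto_nhds_zero.mp h 1 one_pos] with n hn
  rw [Complex.norm_intCast] at hn
  exact Int.abs_lt_one_iff.mp (by exact_mod_cast hn)

theorem card_eq_of_tendsto_powerSum_sub {A B : Multiset ℂ} (h0 : (0 : ℂ) ∉ A + B)
    (hint : ∀ n, powerSum A n - powerSum B n ∈ (algebraMap ℤ ℂ).range)
    (hlim : Tendsto (fun n => powerSum A n - powerSum B n) atTop (𝓝 0)) : A.card = B.card := by
  choose m hm using hint
  have hev : ∀ᶠ n in atTop, powerSum A n - powerSum B n = 0 := by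
    refine (eventually_eq_zero_of_tendsto_intCast (u := m) ?_).mono fun n hn => ?_
    · simpa only [← hm, algebraMap_int_eq, Int.coe_castRingHom] using hlim
    · rw [← hm, hn, map_zero]
  -- `Q` has roots `A + B`, so it is the characteristic polynomial of a recurrence satisfied by
  -- the difference of power sums; `Q 0 ≠ 0` lets the recurrence run backwards.
  set Q := ((A + B).map fun a => X - C a).prod
  have hroot_iff (z : ℂ) : Q.IsRoot z ↔ z ∈ A + B := by
    rw [← mem_roots (monic_multiset_prod_of_monic _ _ fun a _ => monic_X_sub_C a).ne_zero,
      roots_multiset_prod_X_sub_C]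
  have hQ0 : Q.coeff 0 ≠ 0 := by
    rw [coeff_zero_eq_eval_zero]
    exact fun h => h0 ((hroot_iff 0).mp h)
  have hrec (n : ℕ) :
      ∑ i ∈ range (Q.natDegree + 1), Q.coeff i * (powerSum A (n + i) - powerSum B (n + i)) = 0 := by
    simp only [mul_sub, sum_sub_distrib]
    have hA (z) (hz : z ∈ A) : Q.IsRoot z := (hroot_iff z).mpr (Multiset.mem_add.mpr (.inl hz))
    have hB (z) (hz : z ∈ B) : Q.IsRoot z := (hroot_iff z).mpr (Multiset.mem_add.mpr (.inr hz))
    rw [sum_coeff_mul_powerSum_eq_zero hA, sum_coeff_mul_powerSum_eq_zero hB, sub_zero]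
  have := eq_zero_of_recurrence_of_eventually_eq_zero hQ0 hrec hev 0
  rw [powerSum_zero, powerSum_zero, sub_eq_zero] at this
  exact_mod_cast this

theorem MvPolynomial.IsSymmetric.aeval_mem_range {σ R S : Type*} [Fintype σ] [CommRing R]
    [CommRing S] [Algebra R S] {p : MvPolynomial σ R} (hp : p.IsSymmetric) (x : σ → S)
    (hx : ∀ j, (univ.val.map x).esymm j ∈ (algebraMap R S).range) :
    aeval x p ∈ (algebraMap R S).range := by
  obtain ⟨q, hq⟩ := esymmAlgHom_surjective R (Fintype.card σ).le_refl ⟨p, hp⟩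
  have hq' : aeval (fun i : Fin (Fintype.card σ) => esymm σ R (i + 1)) q = p := by
    rw [← esymmAlgHom_apply, hq]
  choose c hc using fun i : Fin (Fintype.card σ) => hx (i + 1)
  have hesymm : (fun i : Fin (Fintype.card σ) => aeval x (esymm σ R (i + 1)))
      = algebraMap R S ∘ c := by
    ext i
    rw [aeval_esymm_eq_multiset_esymm, Function.comp_apply, hc]
  rw [← hq', comp_aeval_apply, hesymm, aeval_algebraMap_apply]
  exact RingHom.mem_range_self _ _

namespace Polynomial

variable {R K : Type*} [CommRing R] [Field K] [Algebra R K] {f : R[X]}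

theorem Monic.esymm_roots_map_mem_range (hf : f.Monic)
    (hsplit : (f.map (algebraMap R K)).Splits) (j : ℕ) :
    (f.map (algebraMap R K)).roots.esymm j ∈ (algebraMap R K).range := by
  set g := f.map (algebraMap R K)
  have hcard : g.roots.card = g.natDegree := splits_iff_card_roots.mp hsplit
  rcases le_or_gt j g.natDegree with hj | hj
  · have hvieta := coeff_eq_esymm_roots_of_card hcard (k := g.natDegree - j) (by omega)
    rw [(hf.map _).leadingCoeff, one_mul, Nat.sub_sub_self hj, coeff_map] at hvieta
    refine ⟨(-1) ^ j * f.coeff (g.natDegree - j), ?_⟩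
    rw [map_mul, hvieta, map_pow, map_neg, map_one, ← mul_assoc, ← mul_pow]
    simp
  · rw [Multiset.esymm, Multiset.powersetCard_eq_empty _ (by omega)]
    exact ⟨0, by simp⟩

theorem Monic.powerSum_roots_map_mem_range (hf : f.Monic)
    (hsplit : (f.map (algebraMap R K)).Splits) (n : ℕ) :
    powerSum (f.map (algebraMap R K)).roots n ∈ (algebraMap R K).range := by
  set s := (f.map (algebraMap R K)).roots
  let x : Fin s.toList.length → K := s.toList.get
  have hx : univ.val.map x = s := by
    rw [Fin.univ_val_map, List.ofFn_get, Multiset.coe_toList]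
  have hsum : powerSum s n = MvPolynomial.aeval x (MvPolynomial.psum _ R n) := by
    conv_lhs => rw [powerSum, ← hx, Multiset.map_map]
    simp only [MvPolynomial.psum, map_sum, map_pow, MvPolynomial.aeval_X, Function.comp_def]
    rfl
  rw [hsum]
  refine (MvPolynomial.psum_isSymmetric _ R n).aeval_mem_range x fun j => ?_
  rw [hx]
  exact hf.esymm_roots_map_mem_range hsplit j

theorem degree_geom_sum_X_lt {R : Type*} [Semiring R] [Nontrivial R] (s : ℕ) :
    (∑ i ∈ range s, X ^ i : R[X]).degree < s := by
  refine (degree_sum_le _ _).trans_lt ((Finset.sup_lt_iff (WithBot.bot_lt_coe s)).mpr ?_)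
  intro i hi
  rw [degree_X_pow]
  exact WithBot.coe_lt_coe.mpr (mem_range.mp hi)

theorem X_mul_derivative_X_pow {R : Type*} [CommSemiring R] (n : ℕ) :
    (X : R[X]) * derivative (X ^ n) = (n : R[X]) * X ^ n := by
  cases n with
  | zero => simp
  | succ n => rw [derivative_X_pow, ← C_eq_natCast, Nat.add_sub_cancel, pow_succ]; ring

end Polynomial

/-- `Ψ_s`, the characteristic polynomial of the `s`-bonacci recurrence. -/
noncomputable def nacciPoly (s : ℕ) : ℤ[X] := X ^ s - ∑ i ∈ range s, X ^ i

noncomputable def nacciRoots (s : ℕ) : Multiset ℂ := ((nacciPoly s).map (algebraMap ℤ ℂ)).roots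

theorem nacciPoly_monic (s : ℕ) : (nacciPoly s).Monic := monic_X_pow_sub (degree_geom_sum_X_lt s)

theorem natDegree_nacciPoly (s : ℕ) : (nacciPoly s).natDegree = s := by
  have hlt : (∑ i ∈ range s, X ^ i : ℤ[X]).degree < (X ^ s : ℤ[X]).degree := by
    rw [degree_X_pow]
    exact degree_geom_sum_X_lt s
  rw [nacciPoly, natDegree_eq_of_degree_eq (degree_sub_eq_left_of_degree_lt hlt), natDegree_X_pow]

theorem mem_nacciRoots {s : ℕ} {z : ℂ} : z ∈ nacciRoots s ↔ z ^ s = ∑ i ∈ range s, z ^ i := by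
  rw [nacciRoots, mem_roots ((nacciPoly_monic s).map _).ne_zero]
  simp [nacciPoly, sub_eq_zero, Polynomial.map_sum, eval_finsetSum]

theorem card_nacciRoots (s : ℕ) : (nacciRoots s).card = s := by
  rw [nacciRoots, splits_iff_card_roots.mp (IsAlgClosed.splits _),
    ((nacciPoly_monic s).natDegree_map _), natDegree_nacciPoly]

theorem ne_zero_of_mem_nacciRoots {s : ℕ} {z : ℂ} (hz : z ∈ nacciRoots s) : z ≠ 0 := by
  rintro rfl
  rw [mem_nacciRoots] at hz
  obtain ⟨s, rfl⟩ := Nat.exists_eq_succ_of_ne_zero (ne_zero_of_pow_eq_geom_sum hz)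
  simp [sum_range_succ'] at hz

theorem eval_derivative_nacciPoly_ne_zero {α : ℝ} {s : ℕ} (hα : 0 < α)
    (hroot : α ^ s = ∑ i ∈ range s, α ^ i) :
    eval (α : ℂ) (derivative ((nacciPoly s).map (algebraMap ℤ ℂ))) ≠ 0 := by
  have hX : X * derivative ((nacciPoly s).map (algebraMap ℤ ℂ))
      = (s : ℂ[X]) * X ^ s - ∑ i ∈ range s, (i : ℂ[X]) * X ^ i := by
    simp only [nacciPoly, Polynomial.map_sub, Polynomial.map_pow, map_X, Polynomial.map_sum,
      derivative_sub, derivative_sum, mul_sub, mul_sum, X_mul_derivative_X_pow]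
  have heval := congrArg (eval (α : ℂ)) hX
  simp only [eval_mul, eval_X, eval_sub, eval_finsetSum, eval_pow, eval_natCast] at heval
  have hlt : ∑ i ∈ range s, (i : ℝ) * α ^ i < s * α ^ s := by
    rw [hroot, mul_sum]
    exact sum_lt_sum_of_nonempty (nonempty_range_iff.mpr (ne_zero_of_pow_eq_geom_sum hroot))
      fun i hi => mul_lt_mul_of_pos_right (by exact_mod_cast mem_range.mp hi) (pow_pos hα i)
  intro h
  rw [h, mul_zero] at heval
  have : (s * α ^ s - ∑ i ∈ range s, (i : ℝ) * α ^ i : ℝ) = 0 := by exact_mod_cast heval.symm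
  linarith

theorem count_nacciRoots_of_pos {α : ℝ} {s : ℕ} (hα : 0 < α)
    (hroot : α ^ s = ∑ i ∈ range s, α ^ i) : (nacciRoots s).count (α : ℂ) = 1 := by
  have hg := ((nacciPoly_monic s).map (algebraMap ℤ ℂ)).ne_zero
  have hmem : (α : ℂ) ∈ nacciRoots s := mem_nacciRoots.mpr (by exact_mod_cast hroot)
  rw [nacciRoots, count_roots]
  have hpos := (rootMultiplicity_pos hg).mpr (isRoot_of_mem_roots hmem)
  have hle := mt (one_lt_rootMultiplicity_iff_isRoot hg).mp
    fun h => eval_derivative_nacciPoly_ne_zero hα hroot h.2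
  omega

theorem nacciRoots_eq_cons {α : ℝ} {s : ℕ} (hα : 0 < α) (hroot : α ^ s = ∑ i ∈ range s, α ^ i) :
    ∃ R : Multiset ℂ, nacciRoots s = (α : ℂ) ::ₘ R ∧ ∀ z ∈ R, ‖z‖ < 1 := by
  have hmem : (α : ℂ) ∈ nacciRoots s := mem_nacciRoots.mpr (by exact_mod_cast hroot)
  refine ⟨(nacciRoots s).erase α, (Multiset.cons_erase hmem).symm, fun z hz => ?_⟩
  by_contra! hnorm
  have hzroot := mem_nacciRoots.mp (Multiset.mem_of_mem_erase hz)
  have hz_eq := Complex.eq_norm_of_pow_eq_geom_sum hzroot hnorm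
  have hnorm_root : ‖z‖ ^ s = ∑ i ∈ range s, ‖z‖ ^ i := by
    rw [hz_eq] at hzroot
    exact_mod_cast hzroot
  have : z = α := by
    rw [hz_eq, eq_of_pow_eq_geom_sum (by linarith) hα hnorm_root hroot]
  rw [this, ← Multiset.count_pos, Multiset.count_erase_self, count_nacciRoots_of_pos hα hroot] at hz
  exact lt_irrefl 0 hz

theorem powerSum_nacciRoots_mem_range (s n : ℕ) :
    powerSum (nacciRoots s) n ∈ (algebraMap ℤ ℂ).range :=
  (nacciPoly_monic s).powerSum_roots_map_mem_range (IsAlgClosed.splits _) n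

theorem tendsto_powerSum_map_pow_nacciRoots_sub {α : ℝ} {s q : ℕ} (hα : 0 < α)
    (hroot : α ^ s = ∑ i ∈ range s, α ^ i) (hq : q ≠ 0) :
    Tendsto (fun n => powerSum ((nacciRoots s).map (· ^ q)) n - ((α : ℂ) ^ q) ^ n) atTop (𝓝 0) := by
  obtain ⟨R, hR, hRnorm⟩ := nacciRoots_eq_cons hα hroot
  refine (tendsto_powerSum_atTop_nhds_zero (M := R.map (· ^ q)) ?_).congr fun n => ?_
  · simp only [Multiset.mem_map, forall_exists_index, and_imp, forall_apply_eq_imp_iff₂, norm_pow]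
    exact fun z hz => pow_lt_one₀ (norm_nonneg z) (hRnorm z hz) hq
  · rw [hR, Multiset.map_cons, powerSum_cons, add_sub_cancel_left]

theorem irrational_log_div_log {a b : ℝ} (ha : 1 < a) (hb : 1 < b)
    (h : ∀ p q : ℕ, 0 < p → 0 < q → a ^ q ≠ b ^ p) : Irrational (Real.log a / Real.log b) := by
  rintro ⟨r, hr⟩
  have hloga := Real.log_pos ha
  have hlogb := Real.log_pos hb
  have hr_pos : 0 < r := by exact_mod_cast hr ▸ div_pos hloga hlogb
  refine h r.num.toNat r.den (by simpa using Rat.num_pos.mpr hr_pos) r.den_pos ?_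
  have hcast : ((r.num.toNat : ℕ) : ℝ) = r.num := by
    exact_mod_cast Int.toNat_of_nonneg (Rat.num_nonneg.mpr hr_pos.le)
  apply Real.log_injOn_pos (pow_pos (zero_lt_one.trans ha) _) (pow_pos (zero_lt_one.trans hb) _)
  rw [Real.log_pow, Real.log_pow, hcast]
  rw [Rat.cast_def, div_eq_div_iff (by positivity) hlogb.ne'] at hr
  linarith

theorem log_ratio_irrational_general (k l : ℕ) (hkl : l < k)
    (α β : ℝ) (hα1 : 1 < α)
    (hαroot : α ^ k = ∑ i ∈ Finset.range k, α ^ i)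
    (hβ1 : 1 < β)
    (hβroot : β ^ l = ∑ i ∈ Finset.range l, β ^ i) :
    Irrational (Real.log α / Real.log β) := by
  refine irrational_log_div_log hα1 hβ1 fun p q hp hq hpow => hkl.ne' ?_
  have hpowC : (α : ℂ) ^ q = (β : ℂ) ^ p := by exact_mod_cast hpow
  have hcard := card_eq_of_tendsto_powerSum_sub (A := (nacciRoots k).map (· ^ q))
    (B := (nacciRoots l).map (· ^ p)) ?_ ?_ ?_
  · simpa only [Multiset.card_map, card_nacciRoots] using hcard
  · simp only [Multiset.mem_add, Multiset.mem_map, not_or, not_exists, not_and]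
    exact ⟨fun z hz => pow_ne_zero q (ne_zero_of_mem_nacciRoots hz),
      fun z hz => pow_ne_zero p (ne_zero_of_mem_nacciRoots hz)⟩
  · intro n
    rw [powerSum_map_pow, powerSum_map_pow]
    exact sub_mem (powerSum_nacciRoots_mem_range k _) (powerSum_nacciRoots_mem_range l _)
  · simpa only [hpowC, sub_sub_sub_cancel_right, sub_zero] using
      (tendsto_powerSum_map_pow_nacciRoots_sub (by linarith) hαroot hq.ne').sub
        (tendsto_powerSum_map_pow_nacciRoots_sub (by linarith) hβroot hp.ne')

/-- For k > ℓ ≥ 2, the number log α(k) / log α(ℓ) is irrational, where α(s) is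
    the dominant root of Ψ_s(x) = x^s − x^(s−1) − ... − x − 1 in (1, 2). -/
theorem log_ratio_irrational (k l : ℕ) (hl : 2 ≤ l) (hkl : l < k)
    (α β : ℝ) (hα1 : 1 < α) (hα2 : α < 2)
    (hαroot : α ^ k = ∑ i ∈ Finset.range k, α ^ i)
    (hβ1 : 1 < β) (hβ2 : β < 2)
    (hβroot : β ^ l = ∑ i ∈ Finset.range l, β ^ i) :
    Irrational (Real.log α / Real.log β) :=
  log_ratio_irrational_general k l hkl α β hα1 hαroot hβ1 hβroot
end
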